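/- One-step compatibility: if duplicate-free lists v and v' are compatible, and v'' is obtained from v' by applying a single list operation (insertion of an element not occurring in v, or deletion of an element), then v and v'' are compatible. -/

import Mathlib

/-- Two lists are compatible: relative order of common elements agrees. -/
def Compatible {U : Type*} [DecidableEq U] (w1 w2 : List U) : Prop :=
  ∀ a b : U, a ∈ w1 → b ∈ w1 → a ∈ w2 → b ∈ w2 →
    (w1.idxOf a < w1.idxOf b ↔ w2.idxOf a < w2.idxOf b)

/-- List operations. -/
inductive LOp (U : Type*) where
  | ins (x : U) (p : ℕ)
  | del (p : ℕ)

/-- Apply a list operation. -/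
def applyOp {U : Type*} : LOp U → List U → List U
  | .ins x p, σ => σ.take p ++ x :: σ.drop p
  | .del p, σ => σ.take p ++ σ.drop (p + 1)

/-!
In a duplicate-free list, `a` comes before `b` exactly when `[a, b]` is a sublist, and this
relation is inherited by every duplicate-free superlist. Hence compatibility with `w'` passes to
any sublist of `w'` (deletion), and compatibility with `w` passes to a superlist of `w` whose
new elements avoid `v` (insertion of a fresh element).
-/

namespace List

variable {α : Type*} [DecidableEq α]

theorem Nodup.idxOf_lt_idxOf_iff_pair_sublist {l : List α} (hl : l.Nodup) {a b : α}
    (ha : a ∈ l) (hb : b ∈ l) (hab : a ≠ b) :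
    l.idxOf a < l.idxOf b ↔ [a, b] <+ l := by
  induction l with
  | nil => simp at ha
  | cons c l ih =>
    rw [nodup_cons] at hl
    grind

theorem Sublist.idxOf_lt_idxOf {l l' : List α} (hs : l <+ l') (hl' : l'.Nodup) {a b : α}
    (ha : a ∈ l) (hb : b ∈ l) (h : l.idxOf a < l.idxOf b) : l'.idxOf a < l'.idxOf b := by
  have hab : a ≠ b := by rintro rfl; exact lt_irrefl _ h
  rw [hl'.idxOf_lt_idxOf_iff_pair_sublist (hs.subset ha) (hs.subset hb) hab]
  exact (((hl'.sublist hs).idxOf_lt_idxOf_iff_pair_sublist ha hb hab).1 h).trans hs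

theorem Sublist.idxOf_lt_idxOf_iff {l l' : List α} (hs : l <+ l') (hl' : l'.Nodup) {a b : α}
    (ha : a ∈ l) (hb : b ∈ l) : l.idxOf a < l.idxOf b ↔ l'.idxOf a < l'.idxOf b := by
  refine ⟨hs.idxOf_lt_idxOf hl' ha hb, fun h => ?_⟩
  by_contra hn
  rcases (not_lt.1 hn).lt_or_eq with hlt | heq
  · exact lt_asymm h (hs.idxOf_lt_idxOf hl' hb ha hlt)
  · obtain rfl := (idxOf_inj hb).1 heq
    exact lt_irrefl _ h

end List

open List

section Compatible

variable {α : Type*} [DecidableEq α] {v w w' : List α}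

theorem Compatible.sublist (h : Compatible v w') (hs : w <+ w') (hw' : w'.Nodup) :
    Compatible v w := fun a b ha hb haw hbw =>
  (h a b ha hb (hs.subset haw) (hs.subset hbw)).trans (hs.idxOf_lt_idxOf_iff hw' haw hbw).symm

theorem Compatible.of_sublist (h : Compatible v w) (hs : w <+ w') (hw' : w'.Nodup)
    (hmem : ∀ a ∈ v, a ∈ w' → a ∈ w) : Compatible v w' := fun a b ha hb haw' hbw' => by
  have haw := hmem a ha haw'
  have hbw := hmem b hb hbw'
  exact (h a b ha hb haw hbw).trans (hs.idxOf_lt_idxOf_iff hw' haw hbw)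

end Compatible

section applyOp

variable {α : Type*} (l : List α)

theorem sublist_applyOp_ins (x : α) (p : ℕ) : l <+ applyOp (.ins x p) l := by
  conv_lhs => rw [← l.take_append_drop p]
  exact (l.drop p).sublist_cons_self x |>.append_left _

theorem applyOp_ins_perm (x : α) (p : ℕ) : applyOp (.ins x p) l ~ x :: l := by
  simpa only [applyOp, l.take_append_drop p] using perm_middle (l₁ := l.take p) (l₂ := l.drop p) (a := x)

theorem applyOp_del_sublist (p : ℕ) : applyOp (.del p) l <+ l := by
  rw [applyOp, ← eraseIdx_eq_take_drop_succ]
  exact l.eraseIdx_sublist p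

end applyOp

theorem one_step_compatibility {U : Type*} [DecidableEq U]
    (v v' : List U) (hv' : v'.Nodup)
    (hcompat : Compatible v v') (op : LOp U)
    (hop : match op with
      | .ins x _ => x ∉ v ∧ x ∉ v'
      | .del p => p < v'.length) :
    Compatible v (applyOp op v') := by
  cases op with
  | ins x p =>
    obtain ⟨hxv, hxv'⟩ := hop
    have hperm := applyOp_ins_perm v' x p
    refine hcompat.of_sublist (sublist_applyOp_ins v' x p) (hperm.nodup_iff.2 (hv'.cons hxv'))
      fun a ha ha' => ?_
    rcases List.mem_cons.1 (hperm.subset ha') with rfl | h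
    · exact absurd ha hxv
    · exact h
  | del p => exact hcompat.sublist (applyOp_del_sublist v' p) hv'
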